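/- arXiv:1603.08044 — 2 statements merged into one kernel-verified Lean document; each statement's English description precedes it below -/
import Mathlib

section
/- Assume char F = 2 and let f be a derivation of N. (i) For all i, j with i+1 < j and (i,j) ∉ {(1,3), (t−2,t)}, and every A ∈ N^{ij}, the entry f(A) r s is zero unless either (b r = i and b s ≥ j) or (b s = j and b r < i). (ii) For every A ∈ N^{13}, the entry f(A) r s is zero unless either (b r = 1 and b s ≥ 3) or (b r, b s) = (2, t). (iii) For every A ∈ N^{t−2,t}, the entry f(A) r s is zero unless either (b s = t and b r ≤ t−2) or (b r, b s) = (1, t−1). -/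
/-- `A` is a strictly block upper triangular matrix relative to the block function `b`
(index `r` lies in block `b r`): `A r s = 0` whenever `b r ≥ b s`. -/
def InN {F : Type*} [Field F] {n : ℕ} (b : Fin n → ℕ)
    (A : Matrix (Fin n) (Fin n) F) : Prop :=
  ∀ r s, b s ≤ b r → A r s = 0

/-- `A` lies in the `(i,j)` block `N^{ij}`: `A r s = 0` unless `b r = i` and `b s = j`. -/
def InBlk {F : Type*} [Field F] {n : ℕ} (b : Fin n → ℕ) (i j : ℕ)
    (A : Matrix (Fin n) (Fin n) F) : Prop :=
  ∀ r s, ¬(b r = i ∧ b s = j) → A r s = 0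

/-- `f` is a derivation of the Lie algebra `N` of strictly block upper triangular matrices:
it maps `N` into `N` and satisfies `f [X,Y] = [f X, Y] + [X, f Y]` on `N`,
where `[X,Y] = XY - YX`. -/
def IsDerN {F : Type*} [Field F] {n : ℕ} (b : Fin n → ℕ)
    (f : Matrix (Fin n) (Fin n) F →ₗ[F] Matrix (Fin n) (Fin n) F) : Prop :=
  (∀ A, InN b A → InN b (f A)) ∧
  ∀ X Y, InN b X → InN b Y →
    f (X * Y - Y * X) = (f X * Y - Y * f X) + (X * f Y - f Y * X)

/-!
Write `E p q` for the matrix unit, with `p` in block `i` and `q` in block `j`; by linearity it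
suffices to bound the support of `f (E p q)`. Three identities do this. Since `f` preserves `N`,
entries on or below the diagonal blocks vanish. Since `E p q` multiplies to zero on both sides
with a matrix unit ending in the last block (resp. starting in the first block), the Leibniz rule
kills every entry outside row block `i` and column block `j` that lies left of the last block
column (resp. below the first block row). The remaining corner entries are read off the
Leibniz expansion of `E p q = [E p u, E u q]` for `u` in a block strictly between `i` and `j`,
chosen away from the blocks of the entry; such a block exists except in the two configurations
`(i, j) = (1, 3)`, entry in block `(2, t)`, and `(i, j) = (t - 2, t)`, entry in block `(1, t - 1)`.
-/

open Matrix

theorem Matrix.linearMap_apply_eq_zero_of_single {R l m l' m' : Type*} [Semiring R]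
    [Fintype l] [Fintype m] [DecidableEq l] [DecidableEq m]
    (f : Matrix l m R →ₗ[R] Matrix l' m' R) (A : Matrix l m R) (r : l') (s : m')
    (h : ∀ p q, A p q ≠ 0 → f (single p q 1) r s = 0) : f A r s = 0 := by
  rw [matrix_eq_sum_single A, map_sum, sum_apply]
  refine Finset.sum_eq_zero fun p _ => ?_
  rw [map_sum, sum_apply]
  refine Finset.sum_eq_zero fun q _ => ?_
  by_cases hpq : A p q = 0
  · simp [hpq]
  · rw [← mul_one (A p q), ← smul_eq_mul, ← smul_single, map_smul, smul_apply, h p q hpq, smul_zero]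

theorem inN_single {F : Type*} [Field F] {n : ℕ} {b : Fin n → ℕ} {p q : Fin n} (h : b p < b q)
    (c : F) : InN b (single p q c) := by
  intro r s hle
  rw [single_apply_of_ne]
  rintro ⟨rfl, rfl⟩
  omega

namespace IsDerN

variable {F : Type*} [Field F] {n : ℕ} {b : Fin n → ℕ}
  {f : Matrix (Fin n) (Fin n) F →ₗ[F] Matrix (Fin n) (Fin n) F}

theorem apply_single_eq_zero_of_le (hf : IsDerN b f) {p q r s : Fin n} (hpq : b p < b q)
    (hsr : b s ≤ b r) : f (single p q 1) r s = 0 :=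
  hf.1 _ (inN_single hpq 1) r s hsr

theorem mul_add_mul_eq_of_mul_eq_zero (hf : IsDerN b f) {X Z : Matrix (Fin n) (Fin n) F}
    (hX : InN b X) (hZ : InN b Z) (hXZ : X * Z = 0) (hZX : Z * X = 0) :
    f X * Z + X * f Z = Z * f X + f Z * X := by
  have h := hf.2 X Z hX hZ
  rw [hXZ, hZX, sub_zero, map_zero] at h
  rw [← sub_eq_zero, add_sub_add_comm, ← h]

theorem apply_single_eq_zero_of_right (hf : IsDerN b f) {p q r s w : Fin n} (hpq : b p < b q)
    (hrp : b r ≠ b p) (hsq : b s ≠ b q) (hsw : b s < b w) (hqw : b q < b w) :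
    f (single p q 1) r s = 0 := by
  have h := congrFun₂ (hf.mul_add_mul_eq_of_mul_eq_zero (inN_single hpq 1) (inN_single hsw 1)
    (single_mul_single_of_ne 1 p q s (show q ≠ s by grind) 1)
    (single_mul_single_of_ne 1 s w p (show w ≠ p by grind) 1)) r w
  simp only [Matrix.add_apply, mul_single_apply_same, mul_one,
    single_mul_apply_of_ne _ _ _ _ _ (show r ≠ p by grind),
    mul_single_apply_of_ne _ _ _ _ _ (show w ≠ q by grind), add_zero] at h
  by_cases hrs : r = s
  · rw [h, hrs, single_mul_apply_same, hf.apply_single_eq_zero_of_le hpq le_rfl, mul_zero]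
  · rw [h, single_mul_apply_of_ne _ _ _ _ _ hrs]

theorem apply_single_eq_zero_of_left (hf : IsDerN b f) {p q r s v : Fin n} (hpq : b p < b q)
    (hrp : b r ≠ b p) (hsq : b s ≠ b q) (hvr : b v < b r) (hvp : b v < b p) :
    f (single p q 1) r s = 0 := by
  have h := congrFun₂ (hf.mul_add_mul_eq_of_mul_eq_zero (inN_single hpq 1) (inN_single hvr 1)
    (single_mul_single_of_ne 1 p q v (show q ≠ v by grind) 1)
    (single_mul_single_of_ne 1 v r p (show r ≠ p by grind) 1)) v s
  simp only [Matrix.add_apply, single_mul_apply_same, one_mul,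
    single_mul_apply_of_ne _ _ _ _ _ (show v ≠ p by grind),
    mul_single_apply_of_ne _ _ _ _ _ (show s ≠ q by grind), add_zero] at h
  by_cases hsr : s = r
  · rw [← h, hsr, mul_single_apply_same, hf.apply_single_eq_zero_of_le hpq le_rfl, zero_mul]
  · rw [← h, mul_single_apply_of_ne _ _ _ _ _ hsr]

theorem apply_single_eq_zero_of_mid (hf : IsDerN b f) {p q r s u : Fin n} (hpu : b p < b u)
    (huq : b u < b q) (h₁ : b s ≠ b q ∨ b u ≤ b r) (h₂ : b r ≠ b u ∨ b s ≤ b q)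
    (h₃ : b r ≠ b p ∨ b s ≤ b u) (h₄ : b s ≠ b u ∨ b p ≤ b r) :
    f (single p q 1) r s = 0 := by
  have h := congrFun₂ (hf.2 _ _ (inN_single hpu 1) (inN_single huq 1)) r s
  rw [single_mul_single_same, one_mul,
    single_mul_single_of_ne 1 u q p (show q ≠ p by grind) 1, sub_zero] at h
  have e₁ : (f (single p u 1) * single u q 1 : Matrix _ _ F) r s = 0 := by
    by_cases hs : s = q
    · subst hs
      rw [mul_single_apply_same, hf.apply_single_eq_zero_of_le hpu (by grind), zero_mul]
    · exact mul_single_apply_of_ne _ _ _ _ _ hs _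
  have e₂ : (single u q 1 * f (single p u 1) : Matrix _ _ F) r s = 0 := by
    by_cases hr : r = u
    · subst hr
      rw [single_mul_apply_same, hf.apply_single_eq_zero_of_le hpu (by grind), mul_zero]
    · exact single_mul_apply_of_ne _ _ _ _ _ hr _
  have e₃ : (single p u 1 * f (single u q 1) : Matrix _ _ F) r s = 0 := by
    by_cases hr : r = p
    · subst hr
      rw [single_mul_apply_same, hf.apply_single_eq_zero_of_le huq (by grind), mul_zero]
    · exact single_mul_apply_of_ne _ _ _ _ _ hr _
  have e₄ : (f (single u q 1) * single p u 1 : Matrix _ _ F) r s = 0 := by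
    by_cases hs : s = u
    · subst hs
      rw [mul_single_apply_same, hf.apply_single_eq_zero_of_le huq (by grind), zero_mul]
    · exact mul_single_apply_of_ne _ _ _ _ _ hs _
  simp only [h, Matrix.add_apply, Matrix.sub_apply, e₁, e₂, e₃, e₄, sub_zero, add_zero]

theorem apply_single_eq_zero (hf : IsDerN b f) {t : ℕ} (hlb : ∀ r, 1 ≤ b r)
    (hub : ∀ r, b r ≤ t) (hsurj : ∀ k, 1 ≤ k → k ≤ t → ∃ r, b r = k)
    {p q r s : Fin n} (hpq : b p + 1 < b q)
    (hrow : ¬(b r = b p ∧ b q ≤ b s)) (hcol : ¬(b s = b q ∧ b r < b p))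
    (h13 : ¬(3 < t ∧ b p = 1 ∧ b q = 3 ∧ b r = 2 ∧ b s = t))
    (htt : ¬(3 < t ∧ b p = t - 2 ∧ b q = t ∧ b r = 1 ∧ b s = t - 1)) :
    f (single p q 1) r s = 0 := by
  have := hlb r; have := hlb p; have := hub s; have := hub q
  have mid : ∀ k, b p < k → k < b q → (b s ≠ b q ∨ k ≤ b r) → (b r ≠ k ∨ b s ≤ b q) →
      (b r ≠ b p ∨ b s ≤ k) → (b s ≠ k ∨ b p ≤ b r) → f (single p q 1) r s = 0 := by
    intro k hpk hkq h₁ h₂ h₃ h₄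
    obtain ⟨u, rfl⟩ := hsurj k (by omega) (by omega)
    exact hf.apply_single_eq_zero_of_mid hpk hkq h₁ h₂ h₃ h₄
  by_cases hrs : b s ≤ b r
  · exact hf.apply_single_eq_zero_of_le (by omega) hrs
  by_cases hrp : b r = b p
  · exact mid (b q - 1) (by omega) (by omega) (by omega) (by omega) (by omega) (by omega)
  by_cases hsq : b s = b q
  · exact mid (b p + 1) (by omega) (by omega) (by omega) (by omega) (by omega) (by omega)
  by_cases hinner : b p < b r ∧ b s < b q
  · exact mid (b p + 1) (by omega) (by omega) (by omega) (by omega) (by omega) (by omega)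
  by_cases hright : b s < t ∧ b q < t
  · obtain ⟨w, hw⟩ := hsurj t (by omega) le_rfl
    exact hf.apply_single_eq_zero_of_right (w := w) (by omega) hrp hsq (by omega) (by omega)
  by_cases hleft : 1 < b r ∧ 1 < b p
  · obtain ⟨v, hv⟩ := hsurj 1 le_rfl (by omega)
    exact hf.apply_single_eq_zero_of_left (v := v) (by omega) hrp hsq (by omega) (by omega)
  -- Only corner entries remain: a middle block avoiding `b r` and `b s` exists unless we are in
  -- one of the two excluded configurations.
  by_cases hfirst : b r ≠ b p + 1 ∧ b s ≠ b p + 1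
  · exact mid (b p + 1) (by omega) (by omega) (by omega) (by omega) (by omega) (by omega)
  · exact mid (b p + 2) (by omega) (by omega) (by omega) (by omega) (by omega) (by omega)

theorem apply_eq_zero_of_inBlk (hf : IsDerN b f) {t : ℕ} (hlb : ∀ r, 1 ≤ b r)
    (hub : ∀ r, b r ≤ t) (hsurj : ∀ k, 1 ≤ k → k ≤ t → ∃ r, b r = k)
    {i j : ℕ} (hij : i + 1 < j) {A : Matrix (Fin n) (Fin n) F} (hA : InBlk b i j A) {r s : Fin n}
    (hrow : ¬(b r = i ∧ j ≤ b s)) (hcol : ¬(b s = j ∧ b r < i))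
    (h13 : ¬(3 < t ∧ i = 1 ∧ j = 3 ∧ b r = 2 ∧ b s = t))
    (htt : ¬(3 < t ∧ i = t - 2 ∧ j = t ∧ b r = 1 ∧ b s = t - 1)) :
    f A r s = 0 := by
  refine A.linearMap_apply_eq_zero_of_single f r s fun p q hpq => ?_
  obtain ⟨rfl, rfl⟩ : b p = i ∧ b q = j := not_not.1 (mt (hA p q) hpq)
  exact hf.apply_single_eq_zero hlb hub hsurj hij hrow hcol h13 htt

end IsDerN

theorem stmt12_general {F : Type*} [Field F] {n t : ℕ} (b : Fin n → ℕ) (ht : 3 ≤ t)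
    (hlb : ∀ r, 1 ≤ b r) (hub : ∀ r, b r ≤ t)
    (hsurj : ∀ k, 1 ≤ k → k ≤ t → ∃ r, b r = k)
    (f : Matrix (Fin n) (Fin n) F →ₗ[F] Matrix (Fin n) (Fin n) F)
    (hf : IsDerN b f) :
    (∀ i j, 1 ≤ i → i + 1 < j → j ≤ t → ¬(i = 1 ∧ j = 3) → ¬(i = t - 2 ∧ j = t) →
      ∀ A, InBlk b i j A → ∀ r s,
        ¬(b r = i ∧ j ≤ b s) → ¬(b s = j ∧ b r < i) → f A r s = 0) ∧
    (∀ A, InBlk b 1 3 A → ∀ r s,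
      ¬(b r = 1 ∧ 3 ≤ b s) → ¬(b r = 2 ∧ b s = t) → f A r s = 0) ∧
    (∀ A, InBlk b (t - 2) t A → ∀ r s,
      ¬(b s = t ∧ b r ≤ t - 2) → ¬(b r = 1 ∧ b s = t - 1) → f A r s = 0) := by
  refine ⟨?_, ?_, ?_⟩
  · intro i j _ hij _ h13 htt A hA r s hrow hcol
    exact hf.apply_eq_zero_of_inBlk hlb hub hsurj hij hA hrow hcol (by omega) (by omega)
  · intro A hA r s hrow h2t
    have := hlb r
    exact hf.apply_eq_zero_of_inBlk hlb hub hsurj (by omega) hA hrow (by omega) (by omega)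
      (by omega)
  · intro A hA r s hcol h1t
    have := hub s
    exact hf.apply_eq_zero_of_inBlk hlb hub hsurj (by omega) hA (by omega) (by omega) (by omega)
      (by omega)

/-- when `char F = 2`, for a derivation `f` of `N`: (i) for `i+1 < j` with
`(i,j) ∉ {(1,3),(t-2,t)}`, `f(N^{ij})` lies in blocks `(p,j)`, `p ≤ i`, and `(i,q)`, `q ≥ j`;
(ii) `f(N^{13})` lies in blocks `(1,q)`, `q ≥ 3`, and `(2,t)`;
(iii) `f(N^{t-2,t})` lies in blocks `(p,t)`, `p ≤ t-2`, and `(1,t-1)`. -/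
theorem stmt12 {F : Type*} [Field F] {n t : ℕ} (b : Fin n → ℕ)
    (hn : 1 ≤ n) (ht : 3 ≤ t) (hmono : Monotone b)
    (hlb : ∀ r, 1 ≤ b r) (hub : ∀ r, b r ≤ t)
    (hsurj : ∀ k, 1 ≤ k → k ≤ t → ∃ r, b r = k)
    (hchar : ringChar F = 2)
    (f : Matrix (Fin n) (Fin n) F →ₗ[F] Matrix (Fin n) (Fin n) F)
    (hf : IsDerN b f) :
    (∀ i j, 1 ≤ i → i + 1 < j → j ≤ t → ¬(i = 1 ∧ j = 3) → ¬(i = t - 2 ∧ j = t) →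
      ∀ A, InBlk b i j A → ∀ r s,
        ¬(b r = i ∧ j ≤ b s) → ¬(b s = j ∧ b r < i) → f A r s = 0) ∧
    (∀ A, InBlk b 1 3 A → ∀ r s,
      ¬(b r = 1 ∧ 3 ≤ b s) → ¬(b r = 2 ∧ b s = t) → f A r s = 0) ∧
    (∀ A, InBlk b (t - 2) t A → ∀ r s,
      ¬(b s = t ∧ b r ≤ t - 2) → ¬(b r = 1 ∧ b s = t - 1) → f A r s = 0) :=
  stmt12_general b ht hlb hub hsurj f hf
end

section
/- Assume char F = 2 and let f be a derivation of N. (i) If block t contains at least two indices (#{s : b s = t} ≥ 2), then for every A ∈ N^{t−1,t}, f(A) r s = 0 whenever (b r, b s) = (1, t−2), and for every A ∈ N^{t−2,t}, f(A) r s = 0 whenever (b r, b s) = (1, t−1). (ii) If block t consists of a single index s₁, then, writing F_u ∈ N^{t−1,t} for the matrix with entry 1 in position (u, s₁) and 0 elsewhere (for b u = t−1), and F'_v ∈ N^{t−2,t} for the matrix with entry 1 in position (v, s₁) and 0 elsewhere (for b v = t−2), one has f(F'_v) r u = f(F_u) r v for all indices u with b u = t−1, v with b v = t−2, and r with b r =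 1. -/
open Matrix

lemma Matrix.single_mul_apply_of_apply_eq_zero {α : Type*} [Semiring α] {m : Type*} [Fintype m]
    [DecidableEq m] {a c r e : m} (x : α) {M : Matrix m m α} (h : M c e = 0) :
    (single a c x * M) r e = 0 := by
  rcases eq_or_ne r a with rfl | hra
  · rw [single_mul_apply_same, h, mul_zero]
  · exact single_mul_apply_of_ne x a c r e hra M

section

variable {F : Type*} [Field F] {n : ℕ} {b : Fin n → ℕ}

lemma inN_single_s17 {a c : Fin n} (hac : b a < b c) (x : F) : InN b (single a c x) := by
  intro r s hsr
  simp only [single, of_apply, ite_eq_right_iff]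
  rintro ⟨rfl, rfl⟩
  omega

variable {f : Matrix (Fin n) (Fin n) F →ₗ[F] Matrix (Fin n) (Fin n) F}

lemma IsDerN.single_apply_eq_zero (hf : IsDerN b f) {x q₀ s q : Fin n} (c : F) (r : Fin n)
    (hx : b x < b q₀) (hs : b s < b q₀) (hq : b q = b q₀) (hqq₀ : q ≠ q₀) :
    f (single x q₀ c) r s = 0 := by
  have hX : InN b (single x q₀ c) := inN_single_s17 hx c
  have hY : InN b (single s q (1 : F)) := inN_single_s17 (hq ▸ hs) 1
  have hcomm := congrFun (congrFun (hf.2 _ _ hX hY) r) q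
  rw [single_mul_single_of_ne c x q₀ s (by rintro rfl; omega),
    single_mul_single_of_ne 1 s q x (by rintro rfl; omega), sub_zero, map_zero] at hcomm
  simpa only [Matrix.zero_apply, Matrix.sub_apply, Matrix.add_apply, mul_single_apply_same,
    mul_one, mul_single_apply_of_ne _ _ _ _ _ hqq₀, sub_zero, add_zero,
    single_mul_apply_of_apply_eq_zero 1 (hf.1 _ hX q q le_rfl),
    single_mul_apply_of_apply_eq_zero c (hf.1 _ hY q₀ q hq.le)] using hcomm.symm

lemma IsDerN.apply_eq_zero_of_inBlk_s17 (hf : IsDerN b f) {i k : ℕ}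
    (hk : 1 < (Finset.univ.filter fun q => b q = k).card) (hik : i < k)
    {A : Matrix (Fin n) (Fin n) F} (hA : InBlk b i k A) (r : Fin n) {s : Fin n} (hs : b s < k) :
    f A r s = 0 := by
  rw [matrix_eq_sum_single A]
  simp only [map_sum, Matrix.sum_apply]
  refine Finset.sum_eq_zero fun p _ => Finset.sum_eq_zero fun j _ => ?_
  by_cases hpj : b p = i ∧ b j = k
  · obtain ⟨q, hq, hqj⟩ := Finset.exists_mem_ne hk j
    rw [Finset.mem_filter] at hq
    exact hf.single_apply_eq_zero _ r (by omega) (by omega) (by omega) hqj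
  · rw [hA p j hpj, single_zero, map_zero, Matrix.zero_apply]

lemma IsDerN.single_apply_eq_neg (hf : IsDerN b f) {v u s₁ : Fin n} (r : Fin n)
    (hvu : b v < b u) (hus : b u < b s₁) :
    f (single v s₁ (1 : F)) r u = - f (single u s₁ (1 : F)) r v := by
  have hZ : InN b (single v u (1 : F)) := inN_single_s17 hvu 1
  have hU : InN b (single u s₁ (1 : F)) := inN_single_s17 hus 1
  have hder := congrFun (congrFun (hf.2 _ _ hZ hU) r) u
  rw [single_mul_single_same, one_mul,
    single_mul_single_of_ne 1 u s₁ v (by rintro rfl; omega), sub_zero] at hder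
  simpa only [Matrix.sub_apply, Matrix.add_apply, mul_single_apply_same, mul_one,
    mul_single_apply_of_ne _ _ _ _ _ (show u ≠ s₁ by rintro rfl; omega),
    single_mul_apply_of_apply_eq_zero 1 (hf.1 _ hZ s₁ u hus.le),
    single_mul_apply_of_apply_eq_zero 1 (hf.1 _ hU u u le_rfl), zero_sub, sub_zero, zero_add]
    using hder

end

theorem stmt17_general {F : Type*} [Field F] {n t : ℕ} (b : Fin n → ℕ)
    (ht : 3 ≤ t)
    (hchar : ringChar F = 2)
    (f : Matrix (Fin n) (Fin n) F →ₗ[F] Matrix (Fin n) (Fin n) F)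
    (hf : IsDerN b f) :
    (2 ≤ (Finset.univ.filter fun s => b s = t).card →
      (∀ A, InBlk b (t - 1) t A → ∀ r s, b r = 1 → b s = t - 2 → f A r s = 0) ∧
      (∀ A, InBlk b (t - 2) t A → ∀ r s, b r = 1 → b s = t - 1 → f A r s = 0)) ∧
    (∀ s₁ : Fin n, b s₁ = t → (Finset.univ.filter fun s => b s = t).card = 1 →
      ∀ u v r, b u = t - 1 → b v = t - 2 → b r = 1 →
        f (Matrix.single v s₁ (1 : F)) r u
          = f (Matrix.single u s₁ (1 : F)) r v) := by
  refine ⟨fun hcard => ⟨?_, ?_⟩, ?_⟩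
  · exact fun A hA r s _ hs => hf.apply_eq_zero_of_inBlk_s17 hcard (by omega) hA r (by omega)
  · exact fun A hA r s _ hs => hf.apply_eq_zero_of_inBlk_s17 hcard (by omega) hA r (by omega)
  · intro s₁ hs₁ _ u v r hu hv _
    have : CharP F 2 := hchar ▸ ringChar.charP F
    rw [hf.single_apply_eq_neg r (by omega) (by omega), CharTwo.neg_eq]

/-- for `char F = 2` and a derivation `f` of `N`: (i) if block `t` has at
least two indices then the `(1,t-2)` block of `f(N^{t-1,t})` and the `(1,t-1)` block of
`f(N^{t-2,t})` vanish; (ii) if block `t` is a single index `s₁` then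
`f(F'_v) r u = f(F_u) r v` for `b u = t-1`, `b v = t-2`, `b r = 1`, where
`F_u = E^{t-1,t}_{u s₁}` and `F'_v = E^{t-2,t}_{v s₁}`. -/
theorem stmt17 {F : Type*} [Field F] {n t : ℕ} (b : Fin n → ℕ)
    (hn : 1 ≤ n) (ht : 3 ≤ t) (hmono : Monotone b)
    (hlb : ∀ r, 1 ≤ b r) (hub : ∀ r, b r ≤ t)
    (hsurj : ∀ k, 1 ≤ k → k ≤ t → ∃ r, b r = k)
    (hchar : ringChar F = 2)
    (f : Matrix (Fin n) (Fin n) F →ₗ[F] Matrix (Fin n) (Fin n) F)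
    (hf : IsDerN b f) :
    (2 ≤ (Finset.univ.filter fun s => b s = t).card →
      (∀ A, InBlk b (t - 1) t A → ∀ r s, b r = 1 → b s = t - 2 → f A r s = 0) ∧
      (∀ A, InBlk b (t - 2) t A → ∀ r s, b r = 1 → b s = t - 1 → f A r s = 0)) ∧
    (∀ s₁ : Fin n, b s₁ = t → (Finset.univ.filter fun s => b s = t).card = 1 →
      ∀ u v r, b u = t - 1 → b v = t - 2 → b r = 1 →
        f (Matrix.single v s₁ (1 : F)) r u
          = f (Matrix.single u s₁ (1 : F)) r v) :=
  stmt17_general b ht hchar f hf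
end
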